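/- arXiv:2005.09001 — 2 statements merged into one kernel-verified Lean document; each statement's English description precedes it below -/
import Mathlib

section
/- Let Ω ⊆ ℝⁿ be open, let ζ : Ω → ℂ² be differentiable with ζ(x) a nonzero Majorana spinor for every x ∈ Ω, let a,b ∈ ℝ with (a,b) ≠ (0,0), and set χ(x) = a·ζ(x) + b·(i·σ₃)·ζ(x). Then χ(x) is a nonzero Majorana spinor for every x, and for every coordinate direction μ ∈ {1,…,n} and every x ∈ Ω the contracted derivative of the bilinears is unchanged: Y₁(χ(x))·∂_μ[X₁∘χ](x) + Y₂(χ(x))·∂_μ[X₂∘χ](x) = Y₁(ζ(x))·∂_μ[X₁∘ζ](x) + Y₂(ζ(x))·∂_μ[X₂∘ζ](x). -/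
/-!
With z = a + b i, the spinor χ = a ζ + b (iσ₃) ζ has components (z ζ₀, z̄ ζ₁). This map preserves
the Majorana condition, multiplies N by |z|² and the bilinear ζ̄₀ζ₁ by z̄², so (X₁, X₂) is rotated
by the constant angle −2 arg z:
X₁ ↦ c X₁ + s X₂, X₂ ↦ c X₂ − s X₁ with c = (a² − b²)/(a² + b²), s = 2ab/(a² + b²).
The contracted derivative Y₁ ∂X₁ + Y₂ ∂X₂ = X₂ ∂X₁ − X₁ ∂X₂ is the determinant of (X, ∂X),
which is invariant under rotations since c² + s² = 1.
-/

open Matrix Complex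

noncomputable section

/-- Pauli matrix σ₁. -/
def σ1 : Matrix (Fin 2) (Fin 2) ℂ := !![0, 1; 1, 0]
/-- Pauli matrix σ₂. -/
def σ2 : Matrix (Fin 2) (Fin 2) ℂ := !![0, -I; I, 0]
/-- Pauli matrix σ₃. -/
def σ3 : Matrix (Fin 2) (Fin 2) ℂ := !![1, 0; 0, -1]

/-- A spinor ζ ∈ ℂ² is Majorana if conj(ζ) = i σ₁ ζ componentwise. -/
def IsMajorana (ζ : Fin 2 → ℂ) : Prop := star ζ = (I • σ1).mulVec ζ

/-- The bilinear N(ζ) = ζ†ζ. -/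
def Nbil (ζ : Fin 2 → ℂ) : ℂ := star ζ ⬝ᵥ ζ

/-- The bilinear X₁(ζ) = (ζ†σ₁ζ)/N(ζ). -/
def X1 (ζ : Fin 2 → ℂ) : ℂ := (star ζ ⬝ᵥ σ1.mulVec ζ) / Nbil ζ

/-- The bilinear X₂(ζ) = (ζ†σ₂ζ)/N(ζ). -/
def X2 (ζ : Fin 2 → ℂ) : ℂ := (star ζ ⬝ᵥ σ2.mulVec ζ) / Nbil ζ

/-- Y₁(ζ) = X₂(ζ). -/
def Y1 (ζ : Fin 2 → ℂ) : ℂ := X2 ζ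

/-- Y₂(ζ) = −X₁(ζ). -/
def Y2 (ζ : Fin 2 → ℂ) : ℂ := -X1 ζ

/-- The partial derivative in the μ-th coordinate direction of ℝⁿ. -/
def pderiv {n : ℕ} {E : Type*} [NormedAddCommGroup E] [NormedSpace ℝ E]
    (μ : Fin n) (f : (Fin n → ℝ) → E) (x : Fin n → ℝ) : E :=
  fderiv ℝ f x (Pi.single μ 1)

open ComplexConjugate

def gamma0Rotate (a b : ℝ) (v : Fin 2 → ℂ) : Fin 2 → ℂ :=
  (a : ℂ) • v + (b : ℂ) • (I • σ3).mulVec v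

section

variable (a b : ℝ) (v : Fin 2 → ℂ)

lemma gamma0Rotate_apply_zero : gamma0Rotate a b v 0 = (a + b * I) * v 0 := by
  simp [gamma0Rotate, σ3, dotProduct]
  ring

lemma gamma0Rotate_apply_one : gamma0Rotate a b v 1 = (a - b * I) * v 1 := by
  simp [gamma0Rotate, σ3, dotProduct]
  ring

lemma Nbil_eq : Nbil v = conj (v 0) * v 0 + conj (v 1) * v 1 := by
  simp [Nbil, dotProduct]

lemma star_dotProduct_σ1_mulVec :
    star v ⬝ᵥ σ1.mulVec v = conj (v 0) * v 1 + conj (v 1) * v 0 := by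
  simp [σ1, dotProduct, mulVec]

lemma star_dotProduct_σ2_mulVec :
    star v ⬝ᵥ σ2.mulVec v = -I * conj (v 0) * v 1 + I * conj (v 1) * v 0 := by
  simp [σ2, dotProduct, mulVec]
  ring

lemma Nbil_gamma0Rotate : Nbil (gamma0Rotate a b v) = (a ^ 2 + b ^ 2) * Nbil v := by
  simp only [Nbil_eq, gamma0Rotate_apply_zero, gamma0Rotate_apply_one, map_mul, map_add, map_sub,
    conj_ofReal, conj_I]
  ring_nf
  simp only [I_sq]
  ring

lemma star_dotProduct_σ1_mulVec_gamma0Rotate :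
    star (gamma0Rotate a b v) ⬝ᵥ σ1.mulVec (gamma0Rotate a b v) =
      (a ^ 2 - b ^ 2) * (star v ⬝ᵥ σ1.mulVec v) + 2 * a * b * (star v ⬝ᵥ σ2.mulVec v) := by
  simp only [star_dotProduct_σ1_mulVec, star_dotProduct_σ2_mulVec, gamma0Rotate_apply_zero,
    gamma0Rotate_apply_one, map_mul, map_add, map_sub, conj_ofReal, conj_I]
  ring_nf
  simp only [I_sq]
  ring

lemma star_dotProduct_σ2_mulVec_gamma0Rotate :
    star (gamma0Rotate a b v) ⬝ᵥ σ2.mulVec (gamma0Rotate a b v) =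
      (a ^ 2 - b ^ 2) * (star v ⬝ᵥ σ2.mulVec v) - 2 * a * b * (star v ⬝ᵥ σ1.mulVec v) := by
  simp only [star_dotProduct_σ1_mulVec, star_dotProduct_σ2_mulVec, gamma0Rotate_apply_zero,
    gamma0Rotate_apply_one, map_mul, map_add, map_sub, conj_ofReal, conj_I]
  ring_nf
  simp only [I_sq, I_pow_three]
  ring

-- No side conditions: for v = 0 or a = b = 0 both sides vanish, as x / 0 = 0.
lemma X1_gamma0Rotate :
    X1 (gamma0Rotate a b v) =
      (a ^ 2 - b ^ 2) / (a ^ 2 + b ^ 2) * X1 v + 2 * a * b / (a ^ 2 + b ^ 2) * X2 v := by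
  rw [X1, X1, X2, star_dotProduct_σ1_mulVec_gamma0Rotate, Nbil_gamma0Rotate,
    add_div, mul_div_mul_comm, mul_div_mul_comm]

lemma X2_gamma0Rotate :
    X2 (gamma0Rotate a b v) =
      (a ^ 2 - b ^ 2) / (a ^ 2 + b ^ 2) * X2 v - 2 * a * b / (a ^ 2 + b ^ 2) * X1 v := by
  rw [X1, X2, X2, star_dotProduct_σ2_mulVec_gamma0Rotate, Nbil_gamma0Rotate,
    sub_div, mul_div_mul_comm, mul_div_mul_comm]

lemma isMajorana_iff : IsMajorana v ↔ conj (v 0) = I * v 1 ∧ conj (v 1) = I * v 0 := by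
  simp [IsMajorana, funext_iff, Fin.forall_fin_two, σ1, dotProduct]

end

lemma IsMajorana.gamma0Rotate (a b : ℝ) {v : Fin 2 → ℂ} (hv : IsMajorana v) :
    IsMajorana (gamma0Rotate a b v) := by
  rw [isMajorana_iff] at hv ⊢
  simp only [gamma0Rotate_apply_zero, gamma0Rotate_apply_one, map_mul, map_add, map_sub,
    conj_ofReal, conj_I, hv.1, hv.2]
  constructor <;> ring

lemma Nbil_ne_zero {v : Fin 2 → ℂ} (hv : v ≠ 0) : Nbil v ≠ 0 := by
  open ComplexOrder in exact dotProduct_star_self_eq_zero.not.mpr hv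

lemma ofReal_sq_add_sq_ne_zero {a b : ℝ} (hab : (a, b) ≠ (0, 0)) : (a : ℂ) ^ 2 + b ^ 2 ≠ 0 := by
  have : a ^ 2 + b ^ 2 ≠ 0 := by
    contrapose! hab
    rw [sq, sq, mul_self_add_mul_self_eq_zero] at hab
    rw [hab.1, hab.2]
  exact_mod_cast this

lemma gamma0Rotate_ne_zero {a b : ℝ} (hab : (a, b) ≠ (0, 0)) {v : Fin 2 → ℂ} (hv : v ≠ 0) :
    gamma0Rotate a b v ≠ 0 := fun h =>
  mul_ne_zero (ofReal_sq_add_sq_ne_zero hab) (Nbil_ne_zero hv) <| by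
    rw [← Nbil_gamma0Rotate, h]
    simp [Nbil]

lemma gamma0Rotate_coeff_sq_add_sq {a b : ℝ} (hab : (a, b) ≠ (0, 0)) :
    (((a : ℂ) ^ 2 - b ^ 2) / (a ^ 2 + b ^ 2)) ^ 2 + (2 * a * b / (a ^ 2 + b ^ 2)) ^ 2 = 1 := by
  have := ofReal_sq_add_sq_ne_zero hab
  field_simp
  ring

lemma differentiableAt_star_dotProduct_mulVec_div_Nbil (M : Matrix (Fin 2) (Fin 2) ℂ)
    {v : Fin 2 → ℂ} (hv : v ≠ 0) :
    DifferentiableAt ℝ (fun w => (star w ⬝ᵥ M.mulVec w) / Nbil w) v := by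
  have hN := Nbil_ne_zero hv
  simp only [Nbil, dotProduct, mulVec, div_eq_mul_inv] at hN ⊢
  fun_prop (disch := exact hN)

lemma differentiableAt_X1 {v : Fin 2 → ℂ} (hv : v ≠ 0) : DifferentiableAt ℝ X1 v :=
  differentiableAt_star_dotProduct_mulVec_div_Nbil σ1 hv

lemma differentiableAt_X2 {v : Fin 2 → ℂ} (hv : v ≠ 0) : DifferentiableAt ℝ X2 v :=
  differentiableAt_star_dotProduct_mulVec_div_Nbil σ2 hv

lemma mul_fderiv_sub_mul_fderiv_rotation {E : Type*} [NormedAddCommGroup E] [NormedSpace ℝ E]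
    {F G : E → ℂ} {x : E} (hF : DifferentiableAt ℝ F x) (hG : DifferentiableAt ℝ G x)
    {c s : ℂ} (hcs : c ^ 2 + s ^ 2 = 1) (e : E) :
    (c * G x - s * F x) * fderiv ℝ (fun y => c * F y + s * G y) x e
      - (c * F x + s * G x) * fderiv ℝ (fun y => c * G y - s * F y) x e
      = G x * fderiv ℝ F x e - F x * fderiv ℝ G x e := by
  rw [((hF.hasFDerivAt.const_mul c).fun_add (hG.hasFDerivAt.const_mul s)).fderiv,
    ((hG.hasFDerivAt.const_mul c).fun_sub (hF.hasFDerivAt.const_mul s)).fderiv]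
  simp only [_root_.add_apply, _root_.sub_apply, _root_.smul_apply, smul_eq_mul]
  linear_combination (G x * fderiv ℝ F x e - F x * fderiv ℝ G x e) * hcs

/-- Let ζ : Ω → ℂ² be differentiable with ζ(x) a nonzero Majorana spinor on the open set
Ω, (a,b) ≠ (0,0) real, and χ = a·ζ + b·(iσ₃)ζ. Then χ(x) is a nonzero Majorana spinor
for every x, and the contracted derivative Y_a·∂_μ X_a of the bilinears is unchanged. -/
theorem contracted_bilinear_derivative_invariant {n : ℕ} (Ω : Set (Fin n → ℝ))
    (hΩ : IsOpen Ω) (ζ : (Fin n → ℝ) → (Fin 2 → ℂ)) (hdiff : DifferentiableOn ℝ ζ Ω)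
    (hζ : ∀ x ∈ Ω, ζ x ≠ 0 ∧ IsMajorana (ζ x)) (a b : ℝ) (hab : (a, b) ≠ (0, 0)) :
    let χ : (Fin n → ℝ) → (Fin 2 → ℂ) :=
      fun x => (a : ℂ) • ζ x + (b : ℂ) • (I • σ3).mulVec (ζ x)
    (∀ x ∈ Ω, χ x ≠ 0 ∧ IsMajorana (χ x)) ∧
    (∀ μ : Fin n, ∀ x ∈ Ω,
      Y1 (χ x) * pderiv μ (fun y => X1 (χ y)) x + Y2 (χ x) * pderiv μ (fun y => X2 (χ y)) x
      = Y1 (ζ x) * pderiv μ (fun y => X1 (ζ y)) x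
        + Y2 (ζ x) * pderiv μ (fun y => X2 (ζ y)) x) := by
  intro χ
  refine ⟨fun x hx => ⟨gamma0Rotate_ne_zero hab (hζ x hx).1, (hζ x hx).2.gamma0Rotate a b⟩,
    fun μ x hx => ?_⟩
  have hζx : DifferentiableAt ℝ ζ x := hdiff.differentiableAt (hΩ.mem_nhds hx)
  have hX1 : DifferentiableAt ℝ (fun y => X1 (ζ y)) x :=
    (differentiableAt_X1 (hζ x hx).1).comp x hζx
  have hX2 : DifferentiableAt ℝ (fun y => X2 (ζ y)) x :=
    (differentiableAt_X2 (hζ x hx).1).comp x hζx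
  have hχX1 : (fun y => X1 (χ y)) = _ := funext fun y => X1_gamma0Rotate a b (ζ y)
  have hχX2 : (fun y => X2 (χ y)) = _ := funext fun y => X2_gamma0Rotate a b (ζ y)
  simp only [Y1, Y2, pderiv, hχX1, hχX2, congrFun hχX1 x, congrFun hχX2 x]
  linear_combination mul_fderiv_sub_mul_fderiv_rotation hX1 hX2
    (gamma0Rotate_coeff_sq_add_sq hab) (Pi.single μ 1)
end
end

section
/- Let X = (X₁,X₂) ∈ ℝ² with X₁² + X₂² = 1 and X₂ ≠ 0, set θ = arctan(X₁/X₂), and for ζ₀ ∈ ℂ² set ζ = cos(θ/2)·ζ₀ + sin(θ/2)·(i·σ₃)·ζ₀. Then (X₁σ₁ + X₂σ₂)·ζ = ζ holds if and only if σ₂·ζ₀ = sign(X₂)·ζ₀. -/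
open Matrix Complex

noncomputable section

/-!
Since θ = arctan(X₁/X₂), the unit vector X is sign(X₂)·(sin θ, cos θ). The rotation
R = exp((θ/2)γ₀) = diag(e^{iθ/2}, e^{-iθ/2}) intertwines sin θ σ₁ + cos θ σ₂ with σ₂, so
(X₁σ₁ + X₂σ₂) R ζ₀ = sign(X₂) R σ₂ ζ₀, and cancelling the invertible R reduces the eigenvector
equation to sign(X₂) σ₂ ζ₀ = ζ₀.
-/

namespace Real

theorem sign_mul_abs (y : ℝ) : sign y * |y| = y := by
  rcases lt_trichotomy y 0 with h | rfl | h
  · simp [sign_of_neg h, abs_of_neg h]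
  · simp
  · simp [sign_of_pos h, abs_of_pos h]

theorem sign_mul_self_of_ne_zero {y : ℝ} (hy : y ≠ 0) : sign y * sign y = 1 := by
  rcases sign_apply_eq_of_ne_zero y hy with h | h <;> simp [h]

theorem sqrt_one_add_div_sq (x : ℝ) {y : ℝ} (hy : y ≠ 0) :
    √(1 + (x / y) ^ 2) = √(x ^ 2 + y ^ 2) / |y| := by
  rw [← sqrt_sq_eq_abs, ← sqrt_div' _ (sq_nonneg y)]
  congr 1
  field_simp
  ring

theorem sign_mul_sqrt_mul_sin_arctan_div (x : ℝ) {y : ℝ} (hy : y ≠ 0) :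
    sign y * √(x ^ 2 + y ^ 2) * sin (arctan (x / y)) = x := by
  have hr : √(x ^ 2 + y ^ 2) ≠ 0 := by positivity
  rw [sin_arctan, sqrt_one_add_div_sq x hy]
  field_simp
  rw [mul_right_comm, sign_mul_abs, mul_comm]

theorem sign_mul_sqrt_mul_cos_arctan_div (x : ℝ) {y : ℝ} (hy : y ≠ 0) :
    sign y * √(x ^ 2 + y ^ 2) * cos (arctan (x / y)) = y := by
  have hr : √(x ^ 2 + y ^ 2) ≠ 0 := by positivity
  rw [cos_arctan, sqrt_one_add_div_sq x hy]
  field_simp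
  exact sign_mul_abs y

end Real

theorem smul_eq_iff_eq_smul_of_mul_self_eq_one {R M : Type*} [Monoid R] [MulAction R M] {g : R}
    (hg : g * g = 1) {v w : M} : g • v = w ↔ v = g • w :=
  ⟨fun h ↦ by rw [← h, smul_smul, hg, one_smul], fun h ↦ by rw [h, smul_smul, hg, one_smul]⟩

def spinRotation (θ : ℝ) : Matrix (Fin 2) (Fin 2) ℂ :=
  (Real.cos (θ / 2) : ℂ) • 1 + (Real.sin (θ / 2) : ℂ) • (I • σ3)

theorem spinRotation_mulVec (θ : ℝ) (v : Fin 2 → ℂ) :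
    spinRotation θ *ᵥ v = Real.cos (θ / 2) • v + Real.sin (θ / 2) • (I • σ3) *ᵥ v := by
  simp only [spinRotation, add_mulVec, smul_mulVec, one_mulVec, Complex.coe_smul]

theorem spinRotation_eq (θ : ℝ) : spinRotation θ =
    !![Real.cos (θ / 2) + Real.sin (θ / 2) * I, 0; 0, Real.cos (θ / 2) - Real.sin (θ / 2) * I] := by
  ext i j
  fin_cases i <;> fin_cases j <;> simp [spinRotation, σ3, sub_eq_add_neg]

theorem ofReal_cos_sq_add_ofReal_sin_sq (x : ℝ) :
    (Real.cos x : ℂ) ^ 2 + (Real.sin x : ℂ) ^ 2 = 1 := by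
  exact_mod_cast Real.cos_sq_add_sin_sq x

theorem det_spinRotation (θ : ℝ) : (spinRotation θ).det = 1 := by
  rw [spinRotation_eq, det_fin_two_of]
  linear_combination ofReal_cos_sq_add_ofReal_sin_sq (θ / 2) - (Real.sin (θ / 2) : ℂ) ^ 2 * I_sq

theorem isUnit_spinRotation (θ : ℝ) : IsUnit (spinRotation θ) := by
  rw [isUnit_iff_isUnit_det, det_spinRotation]
  exact isUnit_one

theorem pauli_mul_spinRotation (θ : ℝ) :
    ((Real.sin θ : ℂ) • σ1 + (Real.cos θ : ℂ) • σ2) * spinRotation θ = spinRotation θ * σ2 := by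
  have hsin : Real.sin θ = 2 * Real.sin (θ / 2) * Real.cos (θ / 2) := by
    rw [← Real.sin_two_mul, mul_div_cancel₀ θ two_ne_zero]
  have hcos : Real.cos θ = Real.cos (θ / 2) ^ 2 - Real.sin (θ / 2) ^ 2 := by
    rw [← Real.cos_two_mul', mul_div_cancel₀ θ two_ne_zero]
  have hc := ofReal_cos_sq_add_ofReal_sin_sq (θ / 2)
  rw [spinRotation_eq, hsin, hcos]
  set c := Real.cos (θ / 2)
  set s := Real.sin (θ / 2)
  ext i j
  fin_cases i <;> fin_cases j <;>
    simp only [σ1, σ2, ofReal_mul, ofReal_ofNat, ofReal_sub, ofReal_pow, smul_of, smul_cons,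
      smul_eq_mul, smul_empty, of_add_of, add_cons, head_cons, tail_cons, empty_add_empty,
      Matrix.mul_apply, of_apply, cons_val', cons_val_fin_one, cons_val_zero, cons_val_one,
      Fin.sum_univ_two, Fin.isValue, Fin.zero_eta, Fin.mk_one, mul_zero, zero_mul, mul_one, mul_neg,
      neg_zero, add_zero, zero_add]
  -- Off the diagonal: sin θ ∓ i cos θ = ∓i (c ± i s)², and (c + i s)(c - i s) = c² + s² = 1.
  · linear_combination (-I * (c + s * I)) * hc
      + (I * (c + s * I) * s ^ 2 + (2 * s * c + s ^ 2 * I) * (c - s * I)) * I_sq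
  · linear_combination (I * (c - s * I)) * hc
      + (-I * (c - s * I) * s ^ 2 + (2 * s * c - s ^ 2 * I) * (c + s * I)) * I_sq

/-- Let X ∈ ℝ² be a unit vector with X₂ ≠ 0, θ = arctan(X₁/X₂), and for ζ₀ ∈ ℂ² set
ζ = cos(θ/2)ζ₀ + sin(θ/2)(iσ₃)ζ₀. Then (X₁σ₁ + X₂σ₂)ζ = ζ if and only if
σ₂ζ₀ = sign(X₂)ζ₀. -/
theorem eigenvector_condition_on_constant_spinor (X1 X2 : ℝ)
    (hunit : X1 ^ 2 + X2 ^ 2 = 1) (hX2 : X2 ≠ 0) (ζ0 : Fin 2 → ℂ) :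
    let θ : ℝ := Real.arctan (X1 / X2)
    let ζ : Fin 2 → ℂ :=
      Real.cos (θ / 2) • ζ0 + Real.sin (θ / 2) • (I • σ3).mulVec ζ0
    (((X1 : ℂ) • σ1 + (X2 : ℂ) • σ2).mulVec ζ = ζ ↔
      σ2.mulVec ζ0 = (Real.sign X2 : ℂ) • ζ0) := by
  intro θ ζ
  have hg : (Real.sign X2 : ℂ) * Real.sign X2 = 1 := by
    exact_mod_cast Real.sign_mul_self_of_ne_zero hX2
  have hX : (X1 : ℂ) • σ1 + (X2 : ℂ) • σ2 =
      (Real.sign X2 : ℂ) • ((Real.sin θ : ℂ) • σ1 + (Real.cos θ : ℂ) • σ2) := by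
    have hsin := Real.sign_mul_sqrt_mul_sin_arctan_div X1 hX2
    have hcos := Real.sign_mul_sqrt_mul_cos_arctan_div X1 hX2
    rw [hunit, Real.sqrt_one, mul_one] at hsin hcos
    rw [smul_add, smul_smul, smul_smul, ← ofReal_mul, ← ofReal_mul, hsin, hcos]
  have hζ : ζ = spinRotation θ *ᵥ ζ0 := (spinRotation_mulVec θ ζ0).symm
  rw [hζ, hX, smul_mulVec, mulVec_mulVec, pauli_mul_spinRotation,
    ← mulVec_mulVec, ← mulVec_smul, (mulVec_injective_of_isUnit (isUnit_spinRotation θ)).eq_iff]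
  exact smul_eq_iff_eq_smul_of_mul_self_eq_one hg
end
end
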